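/- Let n_0,…,n_d and m_0,…,m_d be nonnegative integers, and define representations of SU(2): V = Σ_{i=0}^{d} (n_i + m_i)·Sym^{i}(ℂ²) and W = Σ_{i=1}^{d} n_i·Sym^{i−1}(ℂ²) ⊕ Σ_{i=0}^{d} m_i·Sym^{i+1}(ℂ²). Then dim(V⊗V)[0] + dim(W⊗W)[0] − 2·dim(V⊗W)[1] = Σ_{i=0}^{d} (n_i² + m_i²). -/

import Mathlib

/-!
Write `v k = dim V[k]` and `w k = dim W[k]`. Weight multiplicities are invariant under `k ↦ -k`,
so the left-hand side equals `∑ₖ (v k - w (k - 1))²`. The weights of `Sym^{i-1}` shifted up by one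
are those of `Sym^i` without its lowest weight `-i`, and the weights of `Sym^{i+1}` shifted up by
one are those of `Sym^i` together with the new weight `i + 2`. Hence `v k - w (k - 1)` is `n₋ₖ` for
`k ≤ 0`, `-mₖ₋₂` for `k ≥ 2` and `0` for `k = 1`, and summing the squares gives `∑ (nᵢ² + mᵢ²)`.
-/


/-- `wtDim ℓ k` is the dimension of the `k`-weight space (for the standard maximal torus
`S¹ ⊂ SU(2)`, acting by `z ↦ z^k`) of the representation `⊕ᵢ ℓ i · Sym^i(ℂ²)` of `SU(2)`
encoded by its multiplicity function `ℓ : ℕ → ℕ`: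
`dim E[k] = Σ_{i ≥ |k|, i ≡ k (mod 2)} ℓ i`. -/
noncomputable def wtDim (ℓ : ℕ → ℕ) (k : ℤ) : ℕ :=
  ∑ᶠ i : ℕ, if k.natAbs ≤ i ∧ k % 2 = (i : ℤ) % 2 then ℓ i else 0

/-- `tensorWtDim ℓ₁ ℓ₂ k` is the dimension of the `k`-weight space of the tensor product
of the `SU(2)`-representations encoded by `ℓ₁` and `ℓ₂`:
`dim (E⊗F)[k] = Σ_{j ∈ ℤ} dim E[j] · dim F[k-j]`. -/
noncomputable def tensorWtDim (ℓ₁ ℓ₂ : ℕ → ℕ) (k : ℤ) : ℕ :=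
  ∑ᶠ j : ℤ, wtDim ℓ₁ j * wtDim ℓ₂ (k - j)

/-- Multiplicity function of `V = Σ_{i=0}^{d} (n_i + m_i) · Sym^{i}(ℂ²)`. -/
def exampleV (d : ℕ) (n m : ℕ → ℕ) : ℕ → ℕ :=
  fun j => if j ≤ d then n j + m j else 0

/-- Multiplicity function of
`W = Σ_{i=1}^{d} n_i · Sym^{i-1}(ℂ²) ⊕ Σ_{i=0}^{d} m_i · Sym^{i+1}(ℂ²)`
(with the convention `Sym^{-1}(ℂ²) = 0`, so the `i = 0` term of the first sum is dropped). -/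
def exampleW (d : ℕ) (n m : ℕ → ℕ) : ℕ → ℕ :=
  fun j => (if j + 1 ≤ d then n (j + 1) else 0) +
    (if 1 ≤ j ∧ j - 1 ≤ d then m (j - 1) else 0)

open Function

theorem finsum_nat_eq_zero_add {M : Type*} [AddCommMonoid M] {f : ℕ → M}
    (hf : f.HasFiniteSupport) : ∑ᶠ i, f i = f 0 + ∑ᶠ i, f (i + 1) := by
  rw [← finsum_mem_univ, ← Nat.zero_union_range_succ, Set.singleton_union,
    finsum_mem_insert' f (by simp) (hf.subset Set.inter_subset_right),
    finsum_mem_range Nat.succ_injective]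

theorem finsum_eq_finsum_comp_of_support_subset_range {α β M : Type*} [AddCommMonoid M]
    {F : α → M} {g : β → α} (hg : Injective g) (hF : support F ⊆ Set.range g) :
    ∑ᶠ a, F a = ∑ᶠ b, F (g b) := by
  rw [← finsum_mem_univ,
    finsum_mem_inter_support_eq' F Set.univ (Set.range g) fun x hx => iff_of_true trivial (hF hx),
    finsum_mem_range hg]

section IntReindex

variable {M : Type*} [AddCommMonoid M]

lemma finsum_int_ite_nonpos (f : ℕ → M) :
    ∑ᶠ k : ℤ, (if k ≤ 0 then f (-k).toNat else 0) = ∑ᶠ i, f i := by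
  rw [finsum_eq_finsum_comp_of_support_subset_range (g := fun i : ℕ => -(i : ℤ))
    (fun i j h => by simpa using h)]
  · exact finsum_congr fun i => by simp
  · intro k hk
    have hk0 : k ≤ 0 := by_contra fun h => hk (if_neg h)
    exact ⟨(-k).toNat, by dsimp only; omega⟩

lemma finsum_int_ite_two_le (f : ℕ → M) :
    ∑ᶠ k : ℤ, (if 2 ≤ k then f (k - 2).toNat else 0) = ∑ᶠ i, f i := by
  rw [finsum_eq_finsum_comp_of_support_subset_range (g := fun i : ℕ => (i : ℤ) + 2)
    (fun i j h => by simpa using h)]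
  · exact finsum_congr fun i => by simp
  · intro k hk
    have hk2 : 2 ≤ k := by_contra fun h => hk (if_neg h)
    exact ⟨(k - 2).toNat, by dsimp only; omega⟩

lemma hasFiniteSupport_int_ite_nonpos {f : ℕ → M} (hf : f.HasFiniteSupport) :
    HasFiniteSupport fun k : ℤ => if k ≤ 0 then f (-k).toNat else 0 :=
  (hf.image fun i : ℕ => -(i : ℤ)).subset fun k hk => by
    have hk0 : k ≤ 0 := by_contra fun h => hk (if_neg h)
    exact ⟨(-k).toNat, fun h => hk ((if_pos hk0).trans h), by dsimp only; omega⟩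

lemma hasFiniteSupport_int_ite_two_le {f : ℕ → M} (hf : f.HasFiniteSupport) :
    HasFiniteSupport fun k : ℤ => if 2 ≤ k then f (k - 2).toNat else 0 :=
  (hf.image fun i : ℕ => (i : ℤ) + 2).subset fun k hk => by
    have hk2 : 2 ≤ k := by_contra fun h => hk (if_neg h)
    exact ⟨(k - 2).toNat, fun h => hk ((if_pos hk2).trans h), by dsimp only; omega⟩

end IntReindex

/-- `dim Sym^i(ℂ²)[k]`, as an integer. -/
def symWt (i : ℕ) (k : ℤ) : ℤ := if k.natAbs ≤ i ∧ k % 2 = i % 2 then 1 else 0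

-- Written with `-(0 : ℕ)` so that it matches `symWt_succ_sub_symWt` at `i = 0`.
lemma symWt_zero (k : ℤ) : symWt 0 k = if k = -(0 : ℕ) then 1 else 0 := by
  unfold symWt; split_ifs <;> omega

lemma symWt_succ_sub_symWt (i : ℕ) (k : ℤ) :
    symWt (i + 1) k - symWt i (k - 1) = if k = -(i + 1 : ℕ) then 1 else 0 := by
  unfold symWt; split_ifs <;> omega

lemma symWt_sub_symWt_succ (i : ℕ) (k : ℤ) :
    symWt i k - symWt (i + 1) (k - 1) = -if k = (i + 2 : ℕ) then 1 else 0 := by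
  unfold symWt; split_ifs <;> omega

lemma finsum_mul_ite_neg_eq (ℓ : ℕ → ℕ) (k : ℤ) :
    ∑ᶠ i : ℕ, (ℓ i : ℤ) * (if k = -(i : ℤ) then 1 else 0) =
      if k ≤ 0 then (ℓ (-k).toNat : ℤ) else 0 := by
  rw [finsum_eq_single _ (-k).toNat fun i hi => by rw [if_neg (by omega), mul_zero]]
  split_ifs <;> omega

lemma finsum_mul_ite_add_two_eq (ℓ : ℕ → ℕ) (k : ℤ) :
    ∑ᶠ i : ℕ, (ℓ i : ℤ) * (if k = (i + 2 : ℕ) then 1 else 0) =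
      if 2 ≤ k then (ℓ (k - 2).toNat : ℤ) else 0 := by
  rw [finsum_eq_single _ (k - 2).toNat fun i hi => by rw [if_neg (by omega), mul_zero]]
  split_ifs <;> omega

lemma hasFiniteSupport_natCast_mul {g : ℕ → ℕ} (hg : g.HasFiniteSupport) (c : ℕ → ℤ) :
    HasFiniteSupport fun i => (g i : ℤ) * c i := by
  fun_prop (disch := simp)

lemma wtDim_eq_finsum (ℓ : ℕ → ℕ) (k : ℤ) :
    (wtDim ℓ k : ℤ) = ∑ᶠ i, (ℓ i : ℤ) * symWt i k :=
  ((Nat.castAddMonoidHom ℤ).map_finsum_of_injective Nat.cast_injective _).trans <|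
    finsum_congr fun i => by simp only [symWt, Nat.coe_castAddMonoidHom]; split_ifs <;> simp

lemma wtDim_neg (ℓ : ℕ → ℕ) (k : ℤ) : wtDim ℓ (-k) = wtDim ℓ k :=
  finsum_congr fun _ => if_congr (by omega) rfl rfl

lemma hasFiniteSupport_wtDim {ℓ : ℕ → ℕ} (hℓ : ℓ.HasFiniteSupport) :
    (wtDim ℓ).HasFiniteSupport := by
  obtain ⟨N, hN⟩ := hℓ.bddAbove
  refine (Set.finite_Icc (-N : ℤ) N).subset fun k hk => ?_
  by_contra hk'
  refine hk (finsum_eq_zero_of_forall_eq_zero fun i => ?_)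
  split_ifs with h
  · by_contra hi
    have := hN hi
    simp only [Set.mem_Icc, not_and_or, not_le] at hk'
    omega
  · rfl

lemma wtDim_add {f g : ℕ → ℕ} (hf : f.HasFiniteSupport) (hg : g.HasFiniteSupport) (k : ℤ) :
    (wtDim (f + g) k : ℤ) = wtDim f k + wtDim g k := by
  rw [wtDim_eq_finsum, wtDim_eq_finsum, wtDim_eq_finsum,
    ← finsum_add_distrib (hasFiniteSupport_natCast_mul hf _) (hasFiniteSupport_natCast_mul hg _)]
  exact finsum_congr fun i => by simp only [Pi.add_apply, Nat.cast_add]; ring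

/-- The multiplicity function of `⊕ᵢ ℓᵢ · Sym^{i-1}(ℂ²)`, with `Sym^{-1}(ℂ²) = 0`. -/
def lowerMult (ℓ : ℕ → ℕ) : ℕ → ℕ := fun j => ℓ (j + 1)

/-- The multiplicity function of `⊕ᵢ ℓᵢ · Sym^{i+1}(ℂ²)`. -/
def raiseMult (ℓ : ℕ → ℕ) : ℕ → ℕ
  | 0 => 0
  | j + 1 => ℓ j

lemma hasFiniteSupport_lowerMult {ℓ : ℕ → ℕ} (hℓ : ℓ.HasFiniteSupport) :
    (lowerMult ℓ).HasFiniteSupport :=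
  hℓ.comp_of_injective (add_left_injective 1)

lemma hasFiniteSupport_raiseMult {ℓ : ℕ → ℕ} (hℓ : ℓ.HasFiniteSupport) :
    (raiseMult ℓ).HasFiniteSupport := by
  refine (hℓ.image (· + 1) |>.insert 0).subset fun j hj => ?_
  cases j with
  | zero => exact Set.mem_insert 0 _
  | succ j => exact Set.mem_insert_of_mem 0 ⟨j, hj, rfl⟩

lemma wtDim_sub_wtDim_lowerMult {ℓ : ℕ → ℕ} (hℓ : ℓ.HasFiniteSupport) (k : ℤ) :
    (wtDim ℓ k : ℤ) - wtDim (lowerMult ℓ) (k - 1) =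
      if k ≤ 0 then (ℓ (-k).toNat : ℤ) else 0 := by
  have hℓ' := hasFiniteSupport_lowerMult hℓ
  rw [wtDim_eq_finsum, wtDim_eq_finsum,
    finsum_nat_eq_zero_add (hasFiniteSupport_natCast_mul hℓ _), add_sub_assoc,
    ← finsum_sub_distrib (f := fun i => (ℓ (i + 1) : ℤ) * symWt (i + 1) k)
      (hasFiniteSupport_natCast_mul hℓ' _) (hasFiniteSupport_natCast_mul hℓ' _)]
  simp only [lowerMult, ← mul_sub, symWt_succ_sub_symWt, symWt_zero]
  rw [← finsum_nat_eq_zero_add (f := fun i => (ℓ i : ℤ) * if k = -(i : ℤ) then 1 else 0)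
    (hasFiniteSupport_natCast_mul hℓ _), finsum_mul_ite_neg_eq]

lemma wtDim_sub_wtDim_raiseMult {ℓ : ℕ → ℕ} (hℓ : ℓ.HasFiniteSupport) (k : ℤ) :
    (wtDim ℓ k : ℤ) - wtDim (raiseMult ℓ) (k - 1) =
      -if 2 ≤ k then (ℓ (k - 2).toNat : ℤ) else 0 := by
  rw [wtDim_eq_finsum, wtDim_eq_finsum (raiseMult ℓ),
    finsum_nat_eq_zero_add (f := fun i => (raiseMult ℓ i : ℤ) * symWt i (k - 1))
      (hasFiniteSupport_natCast_mul (hasFiniteSupport_raiseMult hℓ) _)]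
  simp only [raiseMult, Nat.cast_zero, zero_mul, zero_add]
  rw [← finsum_sub_distrib (hasFiniteSupport_natCast_mul hℓ _)
    (hasFiniteSupport_natCast_mul hℓ _)]
  simp only [← mul_sub, symWt_sub_symWt_succ, mul_neg]
  rw [finsum_neg_distrib, finsum_mul_ite_add_two_eq]

lemma tensorWtDim_eq_finsum (ℓ₁ ℓ₂ : ℕ → ℕ) (k : ℤ) :
    (tensorWtDim ℓ₁ ℓ₂ k : ℤ) = ∑ᶠ j, (wtDim ℓ₁ j : ℤ) * wtDim ℓ₂ (k - j) :=
  ((Nat.castAddMonoidHom ℤ).map_finsum_of_injective Nat.cast_injective _).trans <|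
    finsum_congr fun _ => Nat.cast_mul _ _

lemma tensorWtDim_self_zero (ℓ : ℕ → ℕ) :
    (tensorWtDim ℓ ℓ 0 : ℤ) = ∑ᶠ k, (wtDim ℓ k : ℤ) ^ 2 := by
  rw [tensorWtDim_eq_finsum]
  exact finsum_congr fun k => by rw [zero_sub, wtDim_neg, sq]

lemma tensorWtDim_one (ℓ₁ ℓ₂ : ℕ → ℕ) :
    (tensorWtDim ℓ₁ ℓ₂ 1 : ℤ) = ∑ᶠ k, (wtDim ℓ₁ k : ℤ) * wtDim ℓ₂ (k - 1) := by
  rw [tensorWtDim_eq_finsum]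
  exact finsum_congr fun k => by rw [← wtDim_neg ℓ₂ (k - 1), neg_sub]

lemma tensorWtDim_combination_eq_finsum_sq {V W : ℕ → ℕ} (hV : V.HasFiniteSupport)
    (hW : W.HasFiniteSupport) :
    (tensorWtDim V V 0 : ℤ) + tensorWtDim W W 0 - 2 * tensorWtDim V W 1 =
      ∑ᶠ k, ((wtDim V k : ℤ) - wtDim W (k - 1)) ^ 2 := by
  have hv : HasFiniteSupport fun k => (wtDim V k : ℤ) := by
    have := hasFiniteSupport_wtDim hV
    fun_prop (disch := simp)
  have hw : HasFiniteSupport fun k => (wtDim W (k - 1) : ℤ) := by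
    have := (hasFiniteSupport_wtDim hW).comp_of_injective (sub_left_injective (b := 1))
    fun_prop (disch := simp)
  have hw_shift : ∑ᶠ k, (wtDim W k : ℤ) ^ 2 = ∑ᶠ k, (wtDim W (k - 1) : ℤ) ^ 2 :=
    (finsum_comp_equiv (Equiv.subRight 1)).symm
  rw [tensorWtDim_self_zero, tensorWtDim_self_zero, tensorWtDim_one, hw_shift, mul_finsum,
    ← finsum_add_distrib (by fun_prop (disch := simp)) (by fun_prop (disch := simp)),
    ← finsum_sub_distrib (by fun_prop (disch := simp)) (by fun_prop (disch := simp))]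
  exact finsum_congr fun k => by ring

theorem tensorWtDim_combination_add_lowerMult_raiseMult {a b : ℕ → ℕ}
    (ha : a.HasFiniteSupport) (hb : b.HasFiniteSupport) :
    (tensorWtDim (a + b) (a + b) 0 : ℤ)
        + tensorWtDim (lowerMult a + raiseMult b) (lowerMult a + raiseMult b) 0
        - 2 * tensorWtDim (a + b) (lowerMult a + raiseMult b) 1 =
      ∑ᶠ i, ((a i : ℤ) ^ 2 + (b i : ℤ) ^ 2) := by
  have ha' := hasFiniteSupport_lowerMult ha
  have hb' := hasFiniteSupport_raiseMult hb
  have ha2 : HasFiniteSupport fun i => (a i : ℤ) ^ 2 := by fun_prop (disch := simp)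
  have hb2 : HasFiniteSupport fun i => (b i : ℤ) ^ 2 := by fun_prop (disch := simp)
  have hsq (k : ℤ) :
      ((wtDim (a + b) k : ℤ) - wtDim (lowerMult a + raiseMult b) (k - 1)) ^ 2 =
        (if k ≤ 0 then (a (-k).toNat : ℤ) ^ 2 else 0) +
          (if 2 ≤ k then (b (k - 2).toNat : ℤ) ^ 2 else 0) := by
    rw [wtDim_add ha hb, wtDim_add ha' hb', add_sub_add_comm, wtDim_sub_wtDim_lowerMult ha,
      wtDim_sub_wtDim_raiseMult hb]
    split_ifs <;> first | omega | ring
  rw [tensorWtDim_combination_eq_finsum_sq (by fun_prop) (by fun_prop), finsum_congr hsq,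
    finsum_add_distrib (hasFiniteSupport_int_ite_nonpos ha2) (hasFiniteSupport_int_ite_two_le hb2),
    finsum_int_ite_nonpos (fun i => (a i : ℤ) ^ 2), finsum_int_ite_two_le (fun i => (b i : ℤ) ^ 2),
    finsum_add_distrib ha2 hb2]

/-- For `V = Σ_{i=0}^{d} (n_i + m_i)·Sym^{i}(ℂ²)` and
`W = Σ_{i=1}^{d} n_i·Sym^{i-1}(ℂ²) ⊕ Σ_{i=0}^{d} m_i·Sym^{i+1}(ℂ²)`,
`dim(V⊗V)[0] + dim(W⊗W)[0] − 2·dim(V⊗W)[1] = Σ_{i=0}^{d} (n_i² + m_i²)`. -/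
theorem example_exact_value (d : ℕ) (n m : ℕ → ℕ) :
    (tensorWtDim (exampleV d n m) (exampleV d n m) 0 : ℤ)
        + tensorWtDim (exampleW d n m) (exampleW d n m) 0
        - 2 * tensorWtDim (exampleV d n m) (exampleW d n m) 1 =
      ∑ i ∈ Finset.range (d + 1), ((n i : ℤ) ^ 2 + (m i : ℤ) ^ 2) := by
  have htrunc (ℓ : ℕ → ℕ) : ((Set.Iic d).indicator ℓ).HasFiniteSupport :=
    (Set.finite_Iic d).subset Set.support_indicator_subset
  have hV : exampleV d n m = (Set.Iic d).indicator n + (Set.Iic d).indicator m := by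
    ext j
    simp only [exampleV, Pi.add_apply, Set.indicator_apply, Set.mem_Iic]
    split_ifs <;> rfl
  have hW : exampleW d n m =
      lowerMult ((Set.Iic d).indicator n) + raiseMult ((Set.Iic d).indicator m) := by
    ext j
    cases j <;> simp [exampleW, lowerMult, raiseMult, Set.indicator_apply]
  rw [hV, hW, tensorWtDim_combination_add_lowerMult_raiseMult (htrunc n) (htrunc m),
    finsum_eq_sum_of_support_subset (s := Finset.range (d + 1))]
  · refine Finset.sum_congr rfl fun i hi => ?_
    have hi' : i ∈ Set.Iic d := Nat.lt_succ_iff.mp (Finset.mem_range.mp hi)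
    rw [Set.indicator_of_mem hi', Set.indicator_of_mem hi']
  · intro i hi
    rw [Finset.coe_range, Set.mem_Iio, Nat.lt_succ_iff]
    by_contra h
    exact hi (by simp [Set.indicator_of_notMem (show i ∉ Set.Iic d from h)])
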